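/- Let G = (g^{ab}) be a symmetric positive definite real 3×3 matrix. For all p, q ∈ ℝ³ one has h² ≤ g^{ab}(p_a−q_a)(p_b−q_b) ≤ p⁰ q⁰ h². -/

import Mathlib

/-! Write `⟨p, q⟩ = pᵀ G q` and `u = p⁰ q⁰`. The radicand of `h` is `|p − q|² − (p⁰ − q⁰)²`, which
gives the lower bound at once. Since `u² = (1 + |p|²)(1 + |q|²)`, the radicand equals
`2 (u − 1 − ⟨p, q⟩)` and `u · radicand − |p − q|² = (u − 1 − ⟨p, q⟩)² + (|p|²|q|² − ⟨p, q⟩²)`,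
which is nonnegative by Cauchy–Schwarz for `G`. In particular the radicand is nonnegative, so it
is `h²`. -/

open Matrix Real

noncomputable section

/-- 3×3 real matrices. -/
abbrev Mat3 := Matrix (Fin 3) (Fin 3) ℝ
/-- Momentum vectors in ℝ³. -/
abbrev V3 := Fin 3 → ℝ

/-- The quadratic form `g^{ab} p_a p_b = pᵀ G p`. -/
def quadG (G : Mat3) (p : V3) : ℝ := p ⬝ᵥ G *ᵥ p

/-- The particle energy `p⁰ = √(1 + g^{ab} p_a p_b)`. -/
def p0 (G : Mat3) (p : V3) : ℝ := Real.sqrt (1 + quadG G p)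

/-- The relative momentum `h = √(−(p⁰−q⁰)² + g^{ab}(p_a−q_a)(p_b−q_b))`. -/
def hrel (G : Mat3) (p q : V3) : ℝ :=
  Real.sqrt (-(p0 G p - p0 G q) ^ 2 + quadG G (p - q))

theorem Matrix.PosSemidef.dotProduct_mulVec_sq_le {n : Type*} [Fintype n] {G : Matrix n n ℝ}
    (hG : G.PosSemidef) (x y : n → ℝ) :
    (x ⬝ᵥ G *ᵥ y) ^ 2 ≤ (x ⬝ᵥ G *ᵥ x) * (y ⬝ᵥ G *ᵥ y) := by
  let _ := G.toSeminormedAddCommGroup hG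
  let _ := G.toInnerProductSpace hG
  have h : (G *ᵥ y) ⬝ᵥ x * ((G *ᵥ y) ⬝ᵥ x) ≤ (G *ᵥ x) ⬝ᵥ x * ((G *ᵥ y) ⬝ᵥ y) :=
    real_inner_mul_inner_self_le x y
  simpa only [sq, dotProduct_comm (G *ᵥ _)] using h

theorem Matrix.IsHermitian.dotProduct_mulVec_comm {n : Type*} [Fintype n] {G : Matrix n n ℝ}
    (hG : G.IsHermitian) (x y : n → ℝ) : y ⬝ᵥ G *ᵥ x = x ⬝ᵥ G *ᵥ y := by
  rw [dotProduct_mulVec, ← mulVec_transpose, dotProduct_comm,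
    ← conjTranspose_eq_transpose_of_trivial, hG.eq]

theorem le_sqrt_one_add_mul_sqrt_one_add_mul {A B C : ℝ} (hA : 0 ≤ A) (hC : 0 ≤ C)
    (hB : B ^ 2 ≤ A * C) :
    A + C - 2 * B ≤
      √(1 + A) * √(1 + C) * (-(√(1 + A) - √(1 + C)) ^ 2 + (A + C - 2 * B)) := by
  set a := √(1 + A)
  set b := √(1 + C)
  have ha : a ^ 2 = 1 + A := sq_sqrt (by linarith)
  have hb : b ^ 2 = 1 + C := sq_sqrt (by linarith)
  have hsos : a * b * (-(a - b) ^ 2 + (A + C - 2 * B)) - (A + C - 2 * B)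
      = (a * b - 1 - B) ^ 2 + (A * C - B ^ 2) := by
    linear_combination (b ^ 2 - a * b) * ha + (1 + A - a * b) * hb
  nlinarith [sq_nonneg (a * b - 1 - B)]

theorem quadG_nonneg {G : Mat3} (hG : G.PosSemidef) (p : V3) : 0 ≤ quadG G p :=
  hG.dotProduct_mulVec_nonneg p

theorem quadG_sub {G : Mat3} (hG : G.IsHermitian) (p q : V3) :
    quadG G (p - q) = quadG G p + quadG G q - 2 * (p ⬝ᵥ G *ᵥ q) := by
  simp only [quadG, sub_dotProduct, mulVec_sub, dotProduct_sub, hG.dotProduct_mulVec_comm p q]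
  ring

theorem quadG_sub_le_p0_mul_p0_mul {G : Mat3} (hG : G.PosSemidef) (p q : V3) :
    quadG G (p - q) ≤
      p0 G p * p0 G q * (-(p0 G p - p0 G q) ^ 2 + quadG G (p - q)) := by
  rw [quadG_sub hG.isHermitian]
  exact le_sqrt_one_add_mul_sqrt_one_add_mul (quadG_nonneg hG p) (quadG_nonneg hG q)
    (hG.dotProduct_mulVec_sq_le p q)

/-- for a symmetric positive definite `G` and all `p, q ∈ ℝ³`,
`h² ≤ g^{ab}(p_a−q_a)(p_b−q_b) ≤ p⁰ q⁰ h²`. -/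
theorem stmt1 (G : Mat3) (hG : G.PosDef) (p q : V3) :
    hrel G p q ^ 2 ≤ quadG G (p - q) ∧
    quadG G (p - q) ≤ p0 G p * p0 G q * hrel G p q ^ 2 := by
  have hupper := quadG_sub_le_p0_mul_p0_mul hG.posSemidef p q
  have hp0q0 : 0 < p0 G p * p0 G q := by
    unfold p0
    have := quadG_nonneg hG.posSemidef p
    have := quadG_nonneg hG.posSemidef q
    positivity
  have hradicand : 0 ≤ -(p0 G p - p0 G q) ^ 2 + quadG G (p - q) :=
    nonneg_of_mul_nonneg_right ((quadG_nonneg hG.posSemidef _).trans hupper) hp0q0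
  rw [hrel, sq_sqrt hradicand]
  exact ⟨by linarith [sq_nonneg (p0 G p - p0 G q)], hupper⟩
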